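/- Assume k − 1 ≤ LR. For every 1 ≤ j ≤ k − 1 one has MC(π^(j)) ≥ MC(π^(j+1)); that is, moving the unique separate selected node one position later in the repair sequence does not increase the min-cut. -/

import Mathlib

/-- Relative location `h_π(i) = #{1 ≤ j ≤ i : π j = π i}`. -/
def relLoc (π : ℕ → ℕ) (i : ℕ) : ℕ :=
  ((Finset.Icc 1 i).filter (fun j => π j = π i)).card

/-- Intra-cluster coefficient `a_i(π) = d_I + 1 − h_π(i)` (truncated subtraction). -/
def aCoef (dI : ℕ) (π : ℕ → ℕ) (i : ℕ) : ℕ :=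
  dI + 1 - relLoc π i

/-- Cross-cluster coefficient `b_i(π) = max(0, d_C − (i − h_π(i)))` (truncated subtraction). -/
def bCoef (dC : ℕ) (π : ℕ → ℕ) (i : ℕ) : ℕ :=
  dC - (i - relLoc π i)

/-- Part incoming weight `w_i(π)`: for a separate position (`π i = 0`) it is
`(d_I + d_C + 1 − i)·β_C`, otherwise `a_i(π)·β_I + b_i(π)·β_C`. -/
noncomputable def weight (dI dC : ℕ) (βI βC : ℝ) (π : ℕ → ℕ) (i : ℕ) : ℝ :=
  if π i = 0 then ((dI + dC + 1 - i : ℕ) : ℝ) * βC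
  else (aCoef dI π i : ℝ) * βI + (bCoef dC π i : ℝ) * βC

/-- Min-cut `MC(π) = Σ_{i=1}^k min(α, w_i(π))`. -/
noncomputable def MC (k dI dC : ℕ) (βI βC α : ℝ) (π : ℕ → ℕ) : ℝ :=
  ∑ i ∈ Finset.Icc 1 k, min α (weight dI dC βI βC π i)

/-- A cluster order: a `k`-tuple with entries in `{0, 1, …, L}`. -/
def IsClusterOrder (L k : ℕ) (π : ℕ → ℕ) : Prop :=
  ∀ i, 1 ≤ i → i ≤ k → π i ≤ L

/-- A selected node distribution `(s_0, s_1, …, s_L)`: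
`R ≥ s_1 ≥ s_2 ≥ … ≥ s_L` and `s_0 + s_1 + … + s_L = k`. -/
def IsDist (L R k : ℕ) (s : ℕ → ℕ) : Prop :=
  (∀ i, 1 ≤ i → i + 1 ≤ L → s (i + 1) ≤ s i) ∧
  (∀ i, 1 ≤ i → i ≤ L → s i ≤ R) ∧
  ∑ i ∈ Finset.range (L + 1), s i = k

/-- `π ∈ Π(s)`: `π` is a cluster order with `#{1 ≤ j ≤ k : π j = c} = s c` for all `0 ≤ c ≤ L`. -/
def MemPi (L k : ℕ) (s : ℕ → ℕ) (π : ℕ → ℕ) : Prop :=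
  IsClusterOrder L k π ∧
  ∀ c, c ≤ L → ((Finset.Icc 1 k).filter (fun j => π j = c)).card = s c

/-- Vertical order of distribution `s` (possibly with separate entries, whose positions are
not constrained here):  over the cluster positions (`π i ≠ 0`) in increasing order, relative
locations are nondecreasing, with ties broken by increasing cluster index. -/
def IsVerticalOrder (L k : ℕ) (s : ℕ → ℕ) (π : ℕ → ℕ) : Prop :=
  MemPi L k s π ∧
  ∀ i j, 1 ≤ i → i < j → j ≤ k → π i ≠ 0 → π j ≠ 0 →
    relLoc π i ≤ relLoc π j ∧ (relLoc π i = relLoc π j → π i < π j)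

/-- The distribution `s*` (no separate node): `s*_0 = 0`, `s*_i = R` for `1 ≤ i ≤ ⌊k/R⌋`,
`s*_{⌊k/R⌋+1} = k − ⌊k/R⌋·R`, and `0` beyond. -/
def sStar0 (R k : ℕ) : ℕ → ℕ := fun i =>
  if i = 0 then 0
  else if i ≤ k / R then R
  else if i = k / R + 1 then k - k / R * R
  else 0

/-- The distribution with one separate node: `s_0 = 1`, `s_i = R` for `1 ≤ i ≤ ⌊(k−1)/R⌋`,
`s_{⌊(k−1)/R⌋+1} = (k−1) − ⌊(k−1)/R⌋·R`, and `0` beyond. -/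
def sStar1 (R k : ℕ) : ℕ → ℕ := fun i =>
  if i = 0 then 1
  else if i ≤ (k - 1) / R then R
  else if i = (k - 1) / R + 1 then (k - 1) - (k - 1) / R * R
  else 0

/-- `π^(j)`: the cluster order with exactly one separate entry, located at position `j`,
whose cluster entries form the vertical order of the distribution `sStar1 R k`. -/
def IsPiJ (L R k j : ℕ) (π : ℕ → ℕ) : Prop :=
  π j = 0 ∧ IsVerticalOrder L k (sStar1 R k) π

/-! Both orders are vertical orders of the same distribution, and a vertical order is determined
by where its separate entries are: at the first position where two of them differ, each of the two
clusters would have to come before the other. Hence `π^(j)` is `π^(j+1)` with positions `j` and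
`j + 1` swapped, and the min-cuts differ only there. Moving the separate entry from `j + 1` to `j`
raises its weight `(d − j)β_C` by `β_C`; moving the cluster entry from `j` to `j + 1` lowers its
weight by at most `β_C`. The cluster weight is the larger one (`d − j ≤ a + b` and `β_C ≤ β_I`), so
by concavity of `t ↦ min(α, t)` the gain dominates the loss. -/

open Finset

def prefixCount (π : ℕ → ℕ) (c n : ℕ) : ℕ :=
  #{x ∈ Icc 1 n | π x = c}

lemma relLoc_eq_prefixCount (π : ℕ → ℕ) (i : ℕ) : relLoc π i = prefixCount π (π i) i := rfl

lemma prefixCount_zero (π : ℕ → ℕ) (c : ℕ) : prefixCount π c 0 = 0 := rfl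

lemma prefixCount_succ (π : ℕ → ℕ) (c n : ℕ) :
    prefixCount π c (n + 1) = prefixCount π c n + if π (n + 1) = c then 1 else 0 := by
  simp only [prefixCount, card_filter]
  exact sum_Icc_succ_top (by omega) _

lemma relLoc_le (π : ℕ → ℕ) (i : ℕ) : relLoc π i ≤ i :=
  (card_filter_le _ _).trans (Nat.card_Icc 1 i).le

lemma prefixCount_mono (π : ℕ → ℕ) (c : ℕ) : Monotone (prefixCount π c) :=
  fun _ _ hnm => card_le_card (filter_subset_filter _ (Icc_subset_Icc_right hnm))

lemma prefixCount_congr {π₁ π₂ : ℕ → ℕ} {n : ℕ} (h : ∀ x ∈ Icc 1 n, π₁ x = π₂ x) (c : ℕ) :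
    prefixCount π₁ c n = prefixCount π₂ c n := by
  unfold prefixCount
  rw [filter_congr fun x hx => by rw [h x hx]]

lemma relLoc_congr {π₁ π₂ : ℕ → ℕ} {n : ℕ} (h : ∀ x ∈ Icc 1 n, π₁ x = π₂ x) {i : ℕ}
    (hi : i ≤ n) : relLoc π₁ i = relLoc π₂ i := by
  have hi' : ∀ x ∈ Icc 1 i, π₁ x = π₂ x := fun x hx =>
    h x (Icc_subset_Icc_right hi hx)
  rcases Nat.eq_zero_or_pos i with rfl | hpos
  · rfl
  · rw [relLoc_eq_prefixCount, relLoc_eq_prefixCount, prefixCount_congr hi',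
      hi' i (mem_Icc.2 ⟨hpos, le_rfl⟩)]

lemma exists_prefixCount_eq_succ {π : ℕ → ℕ} {c n m : ℕ}
    (h : prefixCount π c n < prefixCount π c m) :
    ∃ p, n < p ∧ p ≤ m ∧ π p = c ∧ prefixCount π c p = prefixCount π c n + 1 := by
  induction m with
  | zero => simp [prefixCount_zero] at h
  | succ m ih =>
    by_cases hm : prefixCount π c n < prefixCount π c m
    · obtain ⟨p, hnp, hpm, hp⟩ := ih hm
      exact ⟨p, hnp, hpm.trans m.le_succ, hp⟩
    · have hnm : n ≤ m := by
        by_contra! hmn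
        have := prefixCount_mono π c (show m + 1 ≤ n by omega)
        omega
      have := prefixCount_mono π c hnm
      rw [prefixCount_succ] at h
      split_ifs at h with hc
      · exact ⟨m + 1, by omega, le_rfl, hc, by rw [prefixCount_succ, if_pos hc]; omega⟩
      · omega

lemma MemPi.eq_zero_iff {L k j : ℕ} {s π : ℕ → ℕ} (h : MemPi L k s π) (hs0 : s 0 ≤ 1)
    (hj : j ∈ Icc 1 k) (hπj : π j = 0) {i : ℕ} (hi : i ∈ Icc 1 k) : π i = 0 ↔ i = j := by
  have hcard : #{x ∈ Icc 1 k | π x = 0} ≤ 1 := (h.2 0 L.zero_le).trans_le hs0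
  refine ⟨fun hπi => card_le_one.1 hcard i ?_ j ?_, fun hij => hij ▸ hπj⟩
  · exact mem_filter.2 ⟨hi, hπi⟩
  · exact mem_filter.2 ⟨hj, hπj⟩

/-- The cluster `π₁ (n + 1)` still has to occur in `π₂` after position `n + 1`, with relative
location `relLoc π₁ (n + 1)`; verticality of `π₂` compares that occurrence with `n + 1`. -/
lemma IsVerticalOrder.relLoc_le_of_ne {L k : ℕ} {s π₁ π₂ : ℕ → ℕ} (h₁ : IsVerticalOrder L k s π₁)
    (h₂ : IsVerticalOrder L k s π₂) {n : ℕ} (hn : n + 1 ≤ k) (hagree : ∀ x ∈ Icc 1 n, π₁ x = π₂ x)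
    (h₁0 : π₁ (n + 1) ≠ 0) (h₂0 : π₂ (n + 1) ≠ 0) (hne : π₁ (n + 1) ≠ π₂ (n + 1)) :
    relLoc π₂ (n + 1) ≤ relLoc π₁ (n + 1) ∧
      (relLoc π₂ (n + 1) = relLoc π₁ (n + 1) → π₂ (n + 1) < π₁ (n + 1)) := by
  set c := π₁ (n + 1)
  have hcL : c ≤ L := h₁.1.1 (n + 1) (by omega) hn
  have hrel₁ : relLoc π₁ (n + 1) = prefixCount π₂ c n + 1 := by
    rw [relLoc_eq_prefixCount, prefixCount_succ, if_pos rfl, prefixCount_congr hagree]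
  have hcount₂ : prefixCount π₂ c (n + 1) = prefixCount π₂ c n := by
    rw [prefixCount_succ, if_neg (Ne.symm hne), add_zero]
  have hlt : prefixCount π₂ c (n + 1) < prefixCount π₂ c k := calc
    prefixCount π₂ c (n + 1) < relLoc π₁ (n + 1) := by omega
    _ ≤ prefixCount π₁ c k := prefixCount_mono π₁ c hn
    _ = prefixCount π₂ c k := (h₁.1.2 c hcL).trans (h₂.1.2 c hcL).symm
  obtain ⟨p, hnp, hpk, hpc, hp⟩ := exists_prefixCount_eq_succ hlt
  have hrelp : relLoc π₂ p = relLoc π₁ (n + 1) := by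
    rw [relLoc_eq_prefixCount, hpc, hp, hcount₂, hrel₁]
  rw [← hrelp, ← hpc]
  exact h₂.2 (n + 1) p (by omega) hnp hpk h₂0 (by rwa [hpc])

lemma IsVerticalOrder.eqOn_of_eq_zero_iff {L k : ℕ} {s π₁ π₂ : ℕ → ℕ}
    (h₁ : IsVerticalOrder L k s π₁) (h₂ : IsVerticalOrder L k s π₂)
    (hzero : ∀ i ∈ Icc 1 k, π₁ i = 0 ↔ π₂ i = 0) : ∀ i ∈ Icc 1 k, π₁ i = π₂ i := by
  suffices ∀ n ≤ k, ∀ x ∈ Icc 1 n, π₁ x = π₂ x from this k le_rfl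
  intro n
  induction n with
  | zero => simp
  | succ n ih =>
    intro hn x hx
    have hagree := ih (by omega)
    rcases (mem_Icc.1 hx).2.lt_or_eq with hxn | rfl
    · exact hagree x (mem_Icc.2 ⟨(mem_Icc.1 hx).1, by omega⟩)
    have hmem : n + 1 ∈ Icc 1 k := mem_Icc.2 ⟨by omega, hn⟩
    by_contra hne
    have h₁0 : π₁ (n + 1) ≠ 0 := fun h => hne (h.trans ((hzero _ hmem).1 h).symm)
    have h₂0 : π₂ (n + 1) ≠ 0 := fun h => hne (((hzero _ hmem).2 h).trans h.symm)
    have h₂₁ := h₁.relLoc_le_of_ne h₂ hn hagree h₁0 h₂0 hne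
    have h₁₂ := h₂.relLoc_le_of_ne h₁ hn (fun x hx => (hagree x hx).symm) h₂0 h₁0 (Ne.symm hne)
    omega

lemma MC_congr {k dI dC : ℕ} {βI βC α : ℝ} {π₁ π₂ : ℕ → ℕ}
    (h : ∀ i ∈ Icc 1 k, π₁ i = π₂ i) : MC k dI dC βI βC α π₁ = MC k dI dC βI βC α π₂ :=
  sum_congr rfl fun i hi => by
    unfold weight aCoef bCoef
    rw [h i hi, relLoc_congr h (mem_Icc.1 hi).2]

lemma min_add_add_min_le {α x y c : ℝ} (hc : 0 ≤ c) (hxy : x ≤ y) :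
    min α (y + c) + min α x ≤ min α (x + c) + min α y := by
  simp only [min_def]
  split_ifs <;> linarith

/-- The two terms of the min-cut that change when a separate entry at `j` and a cluster entry
of relative location `h` at `j + 1` trade places. -/
lemma min_weight_exchange_le (α : ℝ) {βI βC : ℝ} (hβ : βC ≤ βI) (hβC : 0 ≤ βC) {dI dC j h : ℕ}
    (hhj : h ≤ j) (hj : j ≤ dI + dC) :
    min α ((dI + 1 - h : ℕ) * βI + (dC - (j - h) : ℕ) * βC)
        + min α ((dI + dC + 1 - (j + 1) : ℕ) * βC)
      ≤ min α ((dI + dC + 1 - j : ℕ) * βC)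
        + min α ((dI + 1 - h : ℕ) * βI + (dC - (j + 1 - h) : ℕ) * βC) := by
  have hsum : dI + dC + 1 - (j + 1) ≤ (dI + 1 - h) + (dC - (j + 1 - h)) := by omega
  have hshift : dC - (j - h) ≤ (dC - (j + 1 - h)) + 1 := by omega
  rw [show dI + dC + 1 - j = (dI + dC + 1 - (j + 1)) + 1 by omega]
  set a := dI + 1 - h
  set b := dC - (j + 1 - h)
  set m := dI + dC + 1 - (j + 1)
  have hmab : (m : ℝ) ≤ a + b := by exact_mod_cast hsum
  have hb' : ((dC - (j - h) : ℕ) : ℝ) ≤ b + 1 := by exact_mod_cast hshift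
  have hsep : (m : ℝ) * βC ≤ a * βI + b * βC := by
    nlinarith [mul_le_mul_of_nonneg_left hβ (Nat.cast_nonneg (α := ℝ) a)]
  have hclu : (a : ℝ) * βI + (dC - (j - h) : ℕ) * βC ≤ a * βI + b * βC + βC := by
    nlinarith
  push_cast
  calc _ ≤ min α (a * βI + b * βC + βC) + min α (m * βC) :=
        add_le_add_left (min_le_min_left α hclu) _
    _ ≤ min α (m * βC + βC) + min α (a * βI + b * βC) := min_add_add_min_le hβC hsep
    _ = _ := by ring_nf

section AdjacentSwap

open Equiv

variable {j : ℕ}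

lemma swap_succ_mem_Icc_iff (hj : 1 ≤ j) {n : ℕ} (hn : n ≠ j) (x : ℕ) :
    swap j (j + 1) x ∈ Icc 1 n ↔ x ∈ Icc 1 n := by
  simp only [mem_Icc, swap_apply_def]
  split_ifs <;> omega

lemma swap_succ_lt_swap_succ {i i' : ℕ} (hi : i ≠ j) (hi' : i' ≠ j) (h : i < i') :
    swap j (j + 1) i < swap j (j + 1) i' := by
  simp only [swap_apply_def]
  split_ifs <;> omega

lemma prefixCount_comp_swap_succ (π : ℕ → ℕ) (hj : 1 ≤ j) (c : ℕ) {n : ℕ} (hn : n ≠ j) :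
    prefixCount (π ∘ swap j (j + 1)) c n = prefixCount π c n :=
  card_equiv (swap j (j + 1)) fun x => by
    simp only [mem_filter, Function.comp_apply, swap_succ_mem_Icc_iff hj hn]

lemma relLoc_comp_swap_succ {π : ℕ → ℕ} (hj : 1 ≤ j) (hπ : π (j + 1) = 0) {i : ℕ}
    (hi : π (swap j (j + 1) i) ≠ 0) :
    relLoc (π ∘ swap j (j + 1)) i = relLoc π (swap j (j + 1) i) := by
  rw [relLoc_eq_prefixCount, relLoc_eq_prefixCount]
  by_cases hij : i = j
  · subst hij
    simp [hπ] at hi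
  by_cases hij' : i = j + 1
  · subst hij'
    simp only [Function.comp_apply, swap_apply_right] at hi ⊢
    rw [prefixCount_comp_swap_succ π hj _ (by omega), prefixCount_succ,
      if_neg (by rw [hπ]; exact Ne.symm hi), add_zero]
  · rw [swap_apply_of_ne_of_ne hij hij', Function.comp_apply, swap_apply_of_ne_of_ne hij hij',
      prefixCount_comp_swap_succ π hj _ hij]

lemma IsVerticalOrder.comp_swap_succ {L k : ℕ} {s π : ℕ → ℕ} (h : IsVerticalOrder L k s π)
    (hj : 1 ≤ j) (hjk : j + 1 ≤ k) (hπ : π (j + 1) = 0) :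
    IsVerticalOrder L k s (π ∘ swap j (j + 1)) := by
  have hkj : k ≠ j := by omega
  refine ⟨⟨fun i hi hik => ?_, fun c hc => ?_⟩, fun i i' hi hii' hi'k h0 h0' => ?_⟩
  · have := (swap_succ_mem_Icc_iff hj hkj i).2 (mem_Icc.2 ⟨hi, hik⟩)
    exact h.1.1 _ (mem_Icc.1 this).1 (mem_Icc.1 this).2
  · exact (prefixCount_comp_swap_succ π hj c hkj).trans (h.1.2 c hc)
  · have hne : ∀ {x}, (π ∘ swap j (j + 1)) x ≠ 0 → x ≠ j := by
      rintro x hx rfl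
      simp [hπ] at hx
    have hσ := (swap_succ_mem_Icc_iff hj hkj i).2 (mem_Icc.2 ⟨hi, by omega⟩)
    have hσ' := (swap_succ_mem_Icc_iff hj hkj i').2 (mem_Icc.2 ⟨by omega, hi'k⟩)
    rw [relLoc_comp_swap_succ hj hπ h0, relLoc_comp_swap_succ hj hπ h0']
    exact h.2 _ _ (mem_Icc.1 hσ).1 (swap_succ_lt_swap_succ (hne h0) (hne h0') hii')
      (mem_Icc.1 hσ').2 h0 h0'

lemma weight_comp_swap_succ_of_ne {dI dC : ℕ} {βI βC : ℝ} {π : ℕ → ℕ} (hj : 1 ≤ j)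
    (hπ : π (j + 1) = 0) {i : ℕ} (hij : i ≠ j) (hij' : i ≠ j + 1) :
    weight dI dC βI βC (π ∘ swap j (j + 1)) i = weight dI dC βI βC π i := by
  have hσ : swap j (j + 1) i = i := swap_apply_of_ne_of_ne hij hij'
  unfold weight aCoef bCoef
  simp only [Function.comp_apply, hσ]
  split_ifs with h0
  · rfl
  · rw [relLoc_comp_swap_succ hj hπ (by rwa [hσ]), hσ]

lemma MC_le_MC_comp_swap_succ {k dI dC : ℕ} {βI βC α : ℝ} {π : ℕ → ℕ} (hβ : βC ≤ βI)
    (hβC : 0 ≤ βC) (hj : 1 ≤ j) (hjk : j + 1 ≤ k) (hjd : j ≤ dI + dC) (hπj : π j ≠ 0)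
    (hπ : π (j + 1) = 0) :
    MC k dI dC βI βC α π ≤ MC k dI dC βI βC α (π ∘ swap j (j + 1)) := by
  have hjmem : j ∈ Icc 1 k := mem_Icc.2 ⟨hj, by omega⟩
  have hj1mem : j + 1 ∈ (Icc 1 k).erase j := mem_erase.2 ⟨by omega, mem_Icc.2 ⟨by omega, hjk⟩⟩
  have hsplit : ∀ π' : ℕ → ℕ, MC k dI dC βI βC α π' =
      min α (weight dI dC βI βC π' j) + min α (weight dI dC βI βC π' (j + 1))
        + ∑ i ∈ ((Icc 1 k).erase j).erase (j + 1), min α (weight dI dC βI βC π' i) := fun π' => by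
    rw [MC, ← add_sum_erase _ _ hjmem, ← add_sum_erase _ _ hj1mem, add_assoc]
  have hrest : ∀ i ∈ ((Icc 1 k).erase j).erase (j + 1),
      min α (weight dI dC βI βC π i) = min α (weight dI dC βI βC (π ∘ swap j (j + 1)) i) :=
    fun i hi => by
      rw [weight_comp_swap_succ_of_ne hj hπ (ne_of_mem_erase (mem_of_mem_erase hi))
        (ne_of_mem_erase hi)]
  have hrel : relLoc (π ∘ swap j (j + 1)) (j + 1) = relLoc π j := by
    rw [relLoc_comp_swap_succ hj hπ (by rwa [swap_apply_right]), swap_apply_right]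
  rw [hsplit, hsplit, sum_congr rfl hrest]
  gcongr ?_ + _
  simp only [weight, aCoef, bCoef, Function.comp_apply, swap_apply_left, swap_apply_right, hπ,
    hπj, hrel, if_true, if_false]
  exact min_weight_exchange_le α hβ hβC (relLoc_le π j) hjd

end AdjacentSwap

theorem stmt6_general (L R k dI dC : ℕ) (βI βC α : ℝ)
    (hkd : k ≤ dI + dC)
    (hβ : βC ≤ βI) (hβC : 0 < βC)
    (j : ℕ) (hj1 : 1 ≤ j) (hjk : j + 1 ≤ k)
    (πa πb : ℕ → ℕ) (ha : IsPiJ L R k j πa) (hb : IsPiJ L R k (j + 1) πb) :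
    MC k dI dC βI βC α πb ≤ MC k dI dC βI βC α πa := by
  obtain ⟨haj, hva⟩ := ha
  obtain ⟨hbj, hvb⟩ := hb
  have hs0 : sStar1 R k 0 ≤ 1 := le_rfl
  have hjmem : j ∈ Icc 1 k := mem_Icc.2 ⟨hj1, by omega⟩
  have hvb' := hvb.comp_swap_succ hj1 hjk hbj
  have hb'j : (πb ∘ Equiv.swap j (j + 1)) j = 0 := by simpa using hbj
  have hagree := hva.eqOn_of_eq_zero_iff hvb' fun i hi => by
    rw [hva.1.eq_zero_iff hs0 hjmem haj hi, hvb'.1.eq_zero_iff hs0 hjmem hb'j hi]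
  have hbj0 : πb j ≠ 0 := fun h => by
    simpa using (hvb.1.eq_zero_iff hs0 (mem_Icc.2 ⟨by omega, hjk⟩) hbj hjmem).1 h
  rw [MC_congr hagree]
  exact MC_le_MC_comp_swap_succ hβ hβC.le hj1 hjk (by omega) hbj0 hbj

/-- moving the unique separate selected node one position later in the repair
sequence does not increase the min-cut: `MC(π^(j+1)) ≤ MC(π^(j))`. -/
theorem stmt6 (L R k dI dC : ℕ) (βI βC α : ℝ)
    (hL : 1 ≤ L) (hR : 2 ≤ R) (hk : 2 ≤ k)
    (hdI : dI = R - 1) (hdC : 1 ≤ dC) (hkd : k ≤ dI + dC)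
    (hβ : βC ≤ βI) (hβC : 0 < βC) (hα : 0 < α)
    (hk1LR : k - 1 ≤ L * R)
    (j : ℕ) (hj1 : 1 ≤ j) (hjk : j + 1 ≤ k)
    (πa πb : ℕ → ℕ) (ha : IsPiJ L R k j πa) (hb : IsPiJ L R k (j + 1) πb) :
    MC k dI dC βI βC α πb ≤ MC k dI dC βI βC α πa :=
  stmt6_general L R k dI dC βI βC α hkd hβ hβC j hj1 hjk πa πb ha hb
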